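/- Let n ≥ 1, β ∈ ℝ, and set ω_k = √(1 + 4 sin²(kπ/(2n+2))) for k = 1, …, n. On ℝ^{2n} with coordinates (x_1,…,x_n,y_1,…,y_n), let I_k = ½(x_k² + y_k²) and H̄ = Σ_{k=1}^n ω_k I_k + (β/(2(2n+2))) [ (9/4) Σ_{k=1}^n I_k²/ω_k² + 6 Σ_{1≤k<l≤n} I_k I_l/(ω_k ω_l) + 3 Σ_{1≤k<(n+1)/2} I_k I_{n+1−k}/(ω_k ω_{n+1−k}) + (3/4) I_{(n+1)/2}²/ω_{(n+1)/2}² ] (the last term present only when n is odd). Then {I_k, I_l} = 0 for all k, l and {I_k, H̄} = 0 for all k, so the fourth-order normal form of the KG lattice with n particles and fixed endpoints is completely integrable with the quadratic first integrals I_1, …, I_n. -/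

import Mathlib

noncomputable section

open Finset

/-- The Poisson bracket on `ℝ^{2n}` with coordinates `(x, y)`:
`{f,g} = Σ_k (∂f/∂x_k ∂g/∂y_k − ∂f/∂y_k ∂g/∂x_k)`. -/
def pb {n : ℕ} (f g : ((Fin n → ℝ) × (Fin n → ℝ)) → ℝ)
    (x : (Fin n → ℝ) × (Fin n → ℝ)) : ℝ :=
  ∑ k : Fin n,
    (fderiv ℝ f x (Pi.single k (1 : ℝ), 0) * fderiv ℝ g x (0, Pi.single k (1 : ℝ))
      - fderiv ℝ f x (0, Pi.single k (1 : ℝ)) * fderiv ℝ g x (Pi.single k (1 : ℝ), 0))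

/-- The coordinate with (1-based) label `j` is the component `(j−1) mod n` of `Fin n`. -/
def co (n : ℕ) (hn : 0 < n) (j : ℕ) : Fin n := ⟨(j - 1) % n, Nat.mod_lt _ hn⟩

/-- The action `I_k = ½(x_k² + y_k²)`. -/
def act (n : ℕ) (hn : 0 < n) (k : ℕ) (x : (Fin n → ℝ) × (Fin n → ℝ)) : ℝ :=
  (x.1 (co n hn k) ^ 2 + x.2 (co n hn k) ^ 2) / 2

/-- The normal-mode frequencies `ω_k = √(1 + 4 sin²(kπ/(2n+2)))` of the KG lattice
with `n` particles and fixed endpoints. -/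
def omg (n k : ℕ) : ℝ := Real.sqrt (1 + 4 * Real.sin (k * Real.pi / (2 * n + 2)) ^ 2)

/-- The fourth-order normal form `H̄` of the KG lattice with `n` particles and fixed
endpoints (the last term present only when `n` is odd). -/
def HbarFix (n : ℕ) (hn : 0 < n) (β : ℝ) (x : (Fin n → ℝ) × (Fin n → ℝ)) : ℝ :=
  ∑ k ∈ Finset.Icc 1 n, omg n k * act n hn k x
    + β / (2 * (2 * n + 2 : ℕ)) *
      ((9 / 4) * ∑ k ∈ Finset.Icc 1 n, act n hn k x ^ 2 / omg n k ^ 2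
        + 6 * ∑ k ∈ Finset.Icc 1 n, ∑ l ∈ Finset.Icc (k + 1) n,
            act n hn k x * act n hn l x / (omg n k * omg n l)
        + 3 * ∑ k ∈ (Finset.Icc 1 n).filter (fun k => 2 * k < n + 1),
            act n hn k x * act n hn (n + 1 - k) x / (omg n k * omg n (n + 1 - k))
        + (if n % 2 = 1 then
            (3 / 4) * act n hn ((n + 1) / 2) x ^ 2 / omg n ((n + 1) / 2) ^ 2
          else 0))

/-! The actions `I_k` and `H̄` are both functions of the action map `A(x) = (I_1, …, I_n)`.
For `F ∘ A` the chain rule gives `∂(F ∘ A)/∂x_c = x_c ∂_c F` and `∂(F ∘ A)/∂y_c = y_c ∂_c F`, so the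
`c`-th summand of `{F ∘ A, G ∘ A}` is `x_c y_c ∂_c F ∂_c G − y_c x_c ∂_c F ∂_c G = 0`. -/

theorem Pi.mul_single_one {ι R : Type*} [DecidableEq ι] [Semiring R] (f : ι → R) (c : ι) :
    f * Pi.single c 1 = f c • Pi.single c 1 := by
  rw [← Pi.single_mul_right, mul_one, ← Pi.single_smul', smul_eq_mul, mul_one]

def actionMap {ι : Type*} (x : (ι → ℝ) × (ι → ℝ)) : ι → ℝ :=
  fun j => (x.1 j ^ 2 + x.2 j ^ 2) / 2

section ActionMap

variable {ι : Type*} [Fintype ι]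

theorem hasFDerivAt_actionMap (x : (ι → ℝ) × (ι → ℝ)) :
    HasFDerivAt actionMap
      (x.1 • ContinuousLinearMap.fst ℝ (ι → ℝ) (ι → ℝ)
        + x.2 • ContinuousLinearMap.snd ℝ (ι → ℝ) (ι → ℝ)) x := by
  have hA : (actionMap : (ι → ℝ) × (ι → ℝ) → ι → ℝ) =
      (2 : ℝ)⁻¹ • (Prod.fst * Prod.fst + Prod.snd * Prod.snd) := by
    funext x j
    simp only [actionMap, Pi.smul_apply, Pi.add_apply, Pi.mul_apply, smul_eq_mul]
    ring
  rw [hA]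
  refine ((hasFDerivAt_fst.mul hasFDerivAt_fst).add
    (hasFDerivAt_snd.mul hasFDerivAt_snd)).const_smul (2 : ℝ)⁻¹ |>.congr_fderiv ?_
  ext v j <;> simp <;> ring

theorem fderiv_comp_actionMap_apply {G : (ι → ℝ) → ℝ} {x : (ι → ℝ) × (ι → ℝ)}
    (hG : DifferentiableAt ℝ G (actionMap x)) (v : (ι → ℝ) × (ι → ℝ)) :
    fderiv ℝ (G ∘ actionMap) x v = fderiv ℝ G (actionMap x) (x.1 * v.1 + x.2 * v.2) := by
  rw [fderiv_comp x hG (hasFDerivAt_actionMap x).differentiableAt,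
    (hasFDerivAt_actionMap x).fderiv]
  simp

end ActionMap

theorem pb_comp_actionMap {n : ℕ} {G G' : (Fin n → ℝ) → ℝ} {x : (Fin n → ℝ) × (Fin n → ℝ)}
    (hG : DifferentiableAt ℝ G (actionMap x)) (hG' : DifferentiableAt ℝ G' (actionMap x)) :
    pb (G ∘ actionMap) (G' ∘ actionMap) x = 0 := by
  refine Finset.sum_eq_zero fun c _ => ?_
  simp only [fderiv_comp_actionMap_apply hG, fderiv_comp_actionMap_apply hG', mul_zero,
    add_zero, zero_add, Pi.mul_single_one, map_smul, smul_eq_mul]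
  ring

theorem act_eq_comp_actionMap (n : ℕ) (hn : 0 < n) (k : ℕ) :
    act n hn k = (fun I : Fin n → ℝ => I (co n hn k)) ∘ actionMap := rfl

def HbarFixOfActions (n : ℕ) (hn : 0 < n) (β : ℝ) (I : Fin n → ℝ) : ℝ :=
  ∑ k ∈ Finset.Icc 1 n, omg n k * I (co n hn k)
    + β / (2 * (2 * n + 2 : ℕ)) *
      ((9 / 4) * ∑ k ∈ Finset.Icc 1 n, I (co n hn k) ^ 2 / omg n k ^ 2
        + 6 * ∑ k ∈ Finset.Icc 1 n, ∑ l ∈ Finset.Icc (k + 1) n,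
            I (co n hn k) * I (co n hn l) / (omg n k * omg n l)
        + 3 * ∑ k ∈ (Finset.Icc 1 n).filter (fun k => 2 * k < n + 1),
            I (co n hn k) * I (co n hn (n + 1 - k)) / (omg n k * omg n (n + 1 - k))
        + (if n % 2 = 1 then
            (3 / 4) * I (co n hn ((n + 1) / 2)) ^ 2 / omg n ((n + 1) / 2) ^ 2
          else 0))

theorem HbarFix_eq_comp_actionMap (n : ℕ) (hn : 0 < n) (β : ℝ) :
    HbarFix n hn β = HbarFixOfActions n hn β ∘ actionMap := rfl

theorem differentiable_HbarFixOfActions (n : ℕ) (hn : 0 < n) (β : ℝ) :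
    Differentiable ℝ (HbarFixOfActions n hn β) := by
  unfold HbarFixOfActions
  split_ifs <;> fun_prop

theorem fixed_endpoints_normal_form_integrable_general (n : ℕ) (hn0 : 0 < n)
    (β : ℝ) :
    (∀ k l, 1 ≤ k → k ≤ n → 1 ≤ l → l ≤ n →
      ∀ x, pb (act n hn0 k) (act n hn0 l) x = 0) ∧
    (∀ k, 1 ≤ k → k ≤ n → ∀ x, pb (act n hn0 k) (HbarFix n hn0 β) x = 0) := by
  have hI (k : ℕ) : Differentiable ℝ fun I : Fin n → ℝ => I (co n hn0 k) := by fun_prop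
  refine ⟨fun k l _ _ _ _ x => ?_, fun k _ _ x => ?_⟩
  · rw [act_eq_comp_actionMap n hn0 k, act_eq_comp_actionMap n hn0 l]
    exact pb_comp_actionMap (hI k _) (hI l _)
  · rw [act_eq_comp_actionMap n hn0 k, HbarFix_eq_comp_actionMap n hn0 β]
    exact pb_comp_actionMap (hI k _) (differentiable_HbarFixOfActions n hn0 β _)

/-- For `n ≥ 1`, the actions `I_1, …, I_n` pairwise Poisson-commute
and each Poisson-commutes with the fourth-order normal form `H̄` of the KG lattice with
`n` particles and fixed endpoints; hence this normal form is completely integrable with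
the quadratic first integrals `I_1, …, I_n`. -/
theorem fixed_endpoints_normal_form_integrable (n : ℕ) (hn : 1 ≤ n) (hn0 : 0 < n)
    (β : ℝ) :
    (∀ k l, 1 ≤ k → k ≤ n → 1 ≤ l → l ≤ n →
      ∀ x, pb (act n hn0 k) (act n hn0 l) x = 0) ∧
    (∀ k, 1 ≤ k → k ≤ n → ∀ x, pb (act n hn0 k) (HbarFix n hn0 β) x = 0) :=
  fixed_endpoints_normal_form_integrable_general n hn0 β

end
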